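/- arXiv:2110.10283 — 5 statements merged into one kernel-verified Lean document; each statement's English description precedes it below -/
import Mathlib

section
/- Let d be a positive integer and let a, b : Fin d → ℝ be Boolean vectors (each coordinate equal to 0 or 1). Define p, q : Fin d → ℝ by p i = 1 + 2·(a i) and q i = 2 − 2·(b i). Then ⟨a, b⟩ = 0 if and only if ‖p − q‖ ≤ √d, where ‖·‖ is the Euclidean norm. -/
/-- **Embedding orthogonality into Euclidean distance.**
For Boolean vectors `a, b : Fin d → ℝ`, with `p i = 1 + 2 * a i` and
`q i = 2 - 2 * b i`, we have `⟨a, b⟩ = 0` iff `‖p - q‖ ≤ √d`. -/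
theorem orthogonal_iff_norm_le_sqrt (d : ℕ) (hd : 0 < d) (a b : Fin d → ℝ)
    (ha : ∀ i, a i = 0 ∨ a i = 1) (hb : ∀ i, b i = 0 ∨ b i = 1)
    (p q : EuclideanSpace ℝ (Fin d))
    (hp : ∀ i, p i = 1 + 2 * a i) (hq : ∀ i, q i = 2 - 2 * b i) :
    (∑ i, a i * b i) = 0 ↔ ‖p - q‖ ≤ Real.sqrt d := by
  have hterm : ∀ i, ((p - q) i) ^ 2 = 1 + 8 * (a i * b i) := by
    intro i
    have hpq : (p - q) i = p i - q i := rfl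
    rw [hpq, hp i, hq i]
    rcases ha i with h1 | h1 <;> rcases hb i with h2 | h2 <;> rw [h1, h2] <;> norm_num
  have hsum : ∑ i, ((p - q) i) ^ 2 = d + 8 * ∑ i, a i * b i := by
    simp only [hterm, Finset.sum_add_distrib, Finset.sum_const, Finset.card_univ,
      Fintype.card_fin, ← Finset.mul_sum]
    ring
  have hnn : (0 : ℝ) ≤ ∑ i, a i * b i := by
    apply Finset.sum_nonneg
    intro i _
    rcases ha i with h1 | h1 <;> rcases hb i with h2 | h2 <;> rw [h1, h2] <;> norm_num
  rw [EuclideanSpace.norm_eq]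
  have habs : ∑ i, ‖(p - q) i‖ ^ 2 = ∑ i, ((p - q) i) ^ 2 := by
    simp [sq_abs]
  rw [habs, hsum]
  constructor
  · intro h
    rw [h]
    norm_num
  · intro h
    have hd0 : (0 : ℝ) ≤ (d : ℝ) := Nat.cast_nonneg d
    have hx0 : (0 : ℝ) ≤ (d : ℝ) + 8 * ∑ i, a i * b i := by linarith
    have h2 : (d : ℝ) + 8 * ∑ i, a i * b i ≤ d := by
      nlinarith [Real.sq_sqrt hx0, Real.sq_sqrt hd0,
        Real.sqrt_nonneg ((d : ℝ) + 8 * ∑ i, a i * b i), Real.sqrt_nonneg (d : ℝ)]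
    linarith
end

section
/- Let d be a positive integer and let a, b : Fin d → ℝ be Boolean vectors (each coordinate equal to 0 or 1). Define p, q : Fin d → ℝ by p i = 1 + 2·(a i) and q i = 2 − 2·(b i). If ⟨a, b⟩ ≠ 0, then ‖p − q‖ ≥ √(d + 8). Hence the embedding separates orthogonal pairs (distance at most √d) from non-orthogonal pairs (distance at least √(d+8)). -/
/-- **Separation of non-orthogonal pairs.**
For Boolean vectors `a, b : Fin d → ℝ`, with `p i = 1 + 2 * a i` and
`q i = 2 - 2 * b i`, if `⟨a, b⟩ ≠ 0` then `‖p - q‖ ≥ √(d + 8)`. -/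
theorem nonorthogonal_norm_ge_sqrt (d : ℕ) (hd : 0 < d) (a b : Fin d → ℝ)
    (ha : ∀ i, a i = 0 ∨ a i = 1) (hb : ∀ i, b i = 0 ∨ b i = 1)
    (p q : EuclideanSpace ℝ (Fin d))
    (hp : ∀ i, p i = 1 + 2 * a i) (hq : ∀ i, q i = 2 - 2 * b i)
    (hab : (∑ i, a i * b i) ≠ 0) :
    ‖p - q‖ ≥ Real.sqrt (d + 8) := by
  have hsq : ∀ i, ‖(p - q) i‖ ^ 2 = 1 + 8 * (a i * b i) := by
    intro i
    have : (p - q) i = p i - q i := rfl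
    rw [this, hp i, hq i, Real.norm_eq_abs, sq_abs]
    rcases ha i with h1 | h1 <;> rcases hb i with h2 | h2 <;> rw [h1, h2] <;> ring
  have hnorm : ‖p - q‖ = Real.sqrt (d + 8 * ∑ i, a i * b i) := by
    rw [EuclideanSpace.norm_eq]
    congr 1
    rw [Finset.sum_congr rfl (fun i _ => hsq i), Finset.sum_add_distrib,
      Finset.sum_const, ← Finset.mul_sum]
    simp [mul_comm]
  have hab1 : (1 : ℝ) ≤ ∑ i, a i * b i := by
    have hterm : ∀ i ∈ Finset.univ, (0:ℝ) ≤ a i * b i := by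
      intro i _
      rcases ha i with h1 | h1 <;> rcases hb i with h2 | h2 <;> rw [h1, h2] <;> norm_num
    obtain ⟨j, -, hj⟩ := Finset.exists_ne_zero_of_sum_ne_zero hab
    have hj1 : a j * b j = 1 := by
      rcases ha j with h1 | h1 <;> rcases hb j with h2 | h2 <;> rw [h1, h2] at hj ⊢ <;>
        simp_all
    calc (1:ℝ) = a j * b j := hj1.symm
      _ ≤ ∑ i, a i * b i := Finset.single_le_sum hterm (Finset.mem_univ j)
  rw [hnorm]
  apply Real.sqrt_le_sqrt
  linarith
end

section
/- Let d be a positive integer and let A, B be finite sets of Boolean vectors in {0,1}^d (functions Fin d → ℝ with values in {0,1}). Define the point sets P = { p(a) : a ∈ A } and Q = { q(b) : b ∈ B }, where p(a) i = 1 + 2·(a i) and q(b) i = 2 − 2·(b i). Then there exists a pair (a, b) ∈ A × B with ⟨a, b⟩ = 0 if and only if there exists a pair (a, b) ∈ A × B with ‖p(a) − q(b)‖ ≤ √d. -/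
/-- **Correctness of the reduction from Orthogonal Vectors to Bichromatic Closest Pair.**
For finite sets `A, B` of Boolean vectors in `{0,1}^d` embedded as
`p a i = 1 + 2 * a i` and `q b i = 2 - 2 * b i`, there is an orthogonal pair
`(a, b) ∈ A × B` iff there is a pair with `‖p a - q b‖ ≤ √d`. -/
theorem ov_iff_bichromatic_closest_pair (d : ℕ) (hd : 0 < d)
    (A B : Finset (Fin d → ℝ))
    (hA : ∀ a ∈ A, ∀ i, a i = 0 ∨ a i = 1)
    (hB : ∀ b ∈ B, ∀ i, b i = 0 ∨ b i = 1)
    (p q : (Fin d → ℝ) → EuclideanSpace ℝ (Fin d))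
    (hp : ∀ a i, p a i = 1 + 2 * a i) (hq : ∀ b i, q b i = 2 - 2 * b i) :
    (∃ a ∈ A, ∃ b ∈ B, (∑ i, a i * b i) = 0) ↔
    (∃ a ∈ A, ∃ b ∈ B, ‖p a - q b‖ ≤ Real.sqrt d) := by
  have key : ∀ a ∈ A, ∀ b ∈ B,
      ‖p a - q b‖ = Real.sqrt (d + 8 * ∑ i, a i * b i) := by
    intro a ha b hb
    rw [EuclideanSpace.norm_eq]
    congr 1
    have : ∀ i, |(p a - q b) i| ^ 2 = 1 + 8 * (a i * b i) := by
      intro i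
      have hcoord : (p a - q b) i = p a i - q b i := rfl
      rw [sq_abs, hcoord, hp, hq]
      rcases hA a ha i with h1 | h1 <;> rcases hB b hb i with h2 | h2 <;>
        rw [h1, h2] <;> ring
    simp only [Real.norm_eq_abs]
    rw [Finset.sum_congr rfl fun i _ => this i, Finset.sum_add_distrib,
      Finset.sum_const, ← Finset.mul_sum]
    simp
  constructor
  · rintro ⟨a, ha, b, hb, hab⟩
    refine ⟨a, ha, b, hb, ?_⟩
    rw [key a ha b hb, hab]
    simp
  · rintro ⟨a, ha, b, hb, hle⟩
    refine ⟨a, ha, b, hb, ?_⟩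
    rw [key a ha b hb] at hle
    have hsum : (0:ℝ) ≤ ∑ i, a i * b i := by
      apply Finset.sum_nonneg
      intro i _
      rcases hA a ha i with h1 | h1 <;> rcases hB b hb i with h2 | h2 <;>
        rw [h1, h2] <;> norm_num
    have h2 := (Real.sqrt_le_sqrt_iff (by positivity : (0:ℝ) ≤ (d:ℝ))).mp hle
    linarith
end

section
/- Let d be a positive integer, let a, b : Fin d → ℝ be Boolean vectors (each coordinate equal to 0 or 1), and define plane curves π, σ : Fin d → ℝ² by π_i = (3(i+1), 1 + 2·(a i)) and σ_i = (3(i+1), 2 − 2·(b i)). If ⟨a, b⟩ = 0 then max_{i} ‖π_i − σ_i‖ = 1, and if ⟨a, b⟩ ≠ 0 then max_{i} ‖π_i − σ_i‖ = 3. -/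
/-! The two curves share their `x`-coordinates, so the diagonal cost at index `i` is the vertical
gap `|2 a_i + 2 b_i - 1|`, which for Boolean entries equals `1 + 2 a_i b_i`. All these values are
`1` exactly when `⟨a, b⟩ = 0`, since the terms `a_i b_i` are non-negative; otherwise some
`a_i b_i = 1` and the maximum is `3`. -/

lemma EuclideanSpace.norm_sub_eq_abs_of_apply_zero_eq {p q : EuclideanSpace ℝ (Fin 2)}
    (h : p 0 = q 0) : ‖p - q‖ = |p 1 - q 1| := by
  rw [EuclideanSpace.norm_eq, Fin.sum_univ_two]
  simp [h, Real.sqrt_sq_eq_abs]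

lemma mul_eq_zero_or_one {a b : ℝ} (ha : a = 0 ∨ a = 1) (hb : b = 0 ∨ b = 1) :
    a * b = 0 ∨ a * b = 1 := by
  rcases ha with rfl | rfl <;> simp [hb]

lemma abs_boolean_encoding_sub_eq {a b : ℝ} (ha : a = 0 ∨ a = 1) (hb : b = 0 ∨ b = 1) :
    |(1 + 2 * a) - (2 - 2 * b)| = 1 + 2 * (a * b) := by
  rcases ha with rfl | rfl <;> rcases hb with rfl | rfl <;> norm_num

/-- **Cost of the diagonal traversal.**
For Boolean vectors `a, b : Fin d → ℝ` and the plane curves with vertices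
`π i = (3(i+1), 1 + 2 * a i)` and `σ i = (3(i+1), 2 - 2 * b i)`, the maximum
over all indices `i` of `‖π i - σ i‖` equals `1` if `⟨a, b⟩ = 0` and `3` otherwise. -/
theorem diagonal_traversal_cost (d : ℕ) (hd : 0 < d) (a b : Fin d → ℝ)
    (ha : ∀ i, a i = 0 ∨ a i = 1) (hb : ∀ i, b i = 0 ∨ b i = 1)
    (π σ : Fin d → EuclideanSpace ℝ (Fin 2))
    (hπ : ∀ i, π i = ![3 * (((i : ℕ) : ℝ) + 1), 1 + 2 * a i])
    (hσ : ∀ i, σ i = ![3 * (((i : ℕ) : ℝ) + 1), 2 - 2 * b i]) :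
    ((∑ i, a i * b i) = 0 →
      Finset.univ.sup' ⟨⟨0, hd⟩, Finset.mem_univ _⟩ (fun i => ‖π i - σ i‖) = 1) ∧
    ((∑ i, a i * b i) ≠ 0 →
      Finset.univ.sup' ⟨⟨0, hd⟩, Finset.mem_univ _⟩ (fun i => ‖π i - σ i‖) = 3) := by
  have hcost : ∀ i, ‖π i - σ i‖ = 1 + 2 * (a i * b i) := fun i => by
    rw [EuclideanSpace.norm_sub_eq_abs_of_apply_zero_eq (by simp [hπ, hσ])]
    simpa [hπ, hσ] using abs_boolean_encoding_sub_eq (ha i) (hb i)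
  have hprod : ∀ i, a i * b i = 0 ∨ a i * b i = 1 := fun i => mul_eq_zero_or_one (ha i) (hb i)
  refine ⟨fun hzero => ?_, fun hne => ?_⟩
  · have hall : ∀ i ∈ Finset.univ, a i * b i = 0 :=
      (Finset.sum_eq_zero_iff_of_nonneg fun i _ => by
        rcases hprod i with h | h <;> norm_num [h]).1 hzero
    exact Finset.sup'_eq_of_forall _ _ fun i hi => by rw [hcost, hall i hi]; norm_num
  · obtain ⟨i, -, hi⟩ := Finset.exists_ne_zero_of_sum_ne_zero hne
    refine le_antisymm (Finset.sup'_le _ _ fun j _ => ?_)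
      (Finset.le_sup'_of_le _ (Finset.mem_univ i) ?_)
    · rcases hprod j with h | h <;> rw [hcost, h] <;> norm_num
    · rw [hcost, (hprod i).resolve_left hi]; norm_num
end

section
/- Let d be a positive integer, let a, b : Fin d → ℝ be Boolean vectors (each coordinate equal to 0 or 1), and define plane curves π, σ by π_i = (3i, 1 + 2a_i) and σ_i = (3i, 2 − 2b_i) for 1 ≤ i ≤ d. Then for every traversal (i_1, j_1), …, (i_T, j_T) of π and σ, max_{1 ≤ t ≤ T} ‖π_{i_t} − σ_{j_t}‖ ≥ 1; and if moreover ⟨a, b⟩ ≠ 0, then max_{1 ≤ t ≤ T} ‖π_{i_t} − σ_{j_t}‖ ≥ 3. -/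
/-- A traversal of two curves of length `d`: a sequence `f 1, …, f T` of index
pairs in `{1,…,d}²` with `f 1 = (1,1)`, `f T = (d,d)`, where at each step the
first index advances, the second advances, or both advance together. -/
def IsTraversal (d T : ℕ) (f : ℕ → ℕ × ℕ) : Prop :=
  1 ≤ T ∧ f 1 = (1, 1) ∧ f T = (d, d) ∧
  (∀ t, 1 ≤ t → t ≤ T →
    1 ≤ (f t).1 ∧ (f t).1 ≤ d ∧ 1 ≤ (f t).2 ∧ (f t).2 ≤ d) ∧
  (∀ t, 1 ≤ t → t < T →
    f (t + 1) = ((f t).1 + 1, (f t).2) ∨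
    f (t + 1) = ((f t).1, (f t).2 + 1) ∨
    f (t + 1) = ((f t).1 + 1, (f t).2 + 1))

/-!
The second coordinates of `π i` and `σ j` differ by `2aᵢ + 2bⱼ - 1 ∈ {-1, 1, 3}`, so every
pair of vertices, in particular the starting pair `(π 1, σ 1)`, is at distance at least `1`.
If `aᵢ = bᵢ = 1`, the first index of the traversal moves in steps of at most one from `1` to
`d`, so it equals `i` at some time; there the pair is either `(π i, σ i)`, at vertical
distance `3`, or `(π i, σ j)` with `j ≠ i`, at horizontal distance `3|i - j| ≥ 3`.
-/

open Finset

theorem exists_mem_Icc_eq_of_le_add_one {g : ℕ → ℕ} {m n k : ℕ} (hmn : m ≤ n)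
    (hm : g m ≤ k) (hn : k ≤ g n) (hstep : ∀ t, m ≤ t → t < n → g (t + 1) ≤ g t + 1) :
    ∃ t ∈ Icc m n, g t = k := by
  induction n, hmn using Nat.le_induction with
  | base => exact ⟨m, left_mem_Icc.2 le_rfl, by omega⟩
  | succ n hmn ih =>
    rcases le_or_gt k (g n) with hk | hk
    · obtain ⟨t, ht, hgt⟩ := ih hk fun t h1 h2 => hstep t h1 (by omega)
      exact ⟨t, Icc_subset_Icc_right n.le_succ ht, hgt⟩
    · have := hstep n hmn n.lt_succ_self
      exact ⟨n + 1, right_mem_Icc.2 (by omega), by omega⟩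

theorem IsTraversal.exists_fst_eq {d T : ℕ} {f : ℕ → ℕ × ℕ} (hf : IsTraversal d T f) {k : ℕ}
    (hk : 1 ≤ k) (hkd : k ≤ d) : ∃ t ∈ Icc 1 T, (f t).1 = k := by
  obtain ⟨hT, hf1, hfT, -, hstep⟩ := hf
  refine exists_mem_Icc_eq_of_le_add_one hT (by simpa [hf1]) (by simpa [hfT]) fun t h1 h2 => ?_
  rcases hstep t h1 h2 with h | h | h <;> simp [h]

theorem abs_sub_le_norm_sub_of_ofLp_eq {p q : EuclideanSpace ℝ (Fin 2)} {x y x' y' : ℝ}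
    (hp : p.ofLp = ![x, y]) (hq : q.ofLp = ![x', y']) :
    |x - x'| ≤ ‖p - q‖ ∧ |y - y'| ≤ ‖p - q‖ := by
  have h k : |p k - q k| ≤ ‖p - q‖ := PiLp.norm_apply_le (p - q) k
  exact ⟨by simpa [hp, hq] using h 0, by simpa [hp, hq] using h 1⟩

theorem one_le_abs_of_mem_zero_one {x y : ℝ} (hx : x = 0 ∨ x = 1) (hy : y = 0 ∨ y = 1) :
    1 ≤ |1 + 2 * x - (2 - 2 * y)| := by
  rcases hx with rfl | rfl <;> rcases hy with rfl | rfl <;> norm_num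

theorem three_le_abs_sub_of_ne {i j : ℕ} (hij : i ≠ j) : 3 ≤ |3 * (i : ℝ) - 3 * j| := by
  rcases Nat.lt_or_gt_of_ne hij with h | h
  · rw [abs_sub_comm, abs_of_nonneg] <;>
    · have : (i : ℝ) + 1 ≤ j := by exact_mod_cast h
      linarith
  · rw [abs_of_nonneg] <;>
    · have : (j : ℝ) + 1 ≤ i := by exact_mod_cast h
      linarith

/-- **Every traversal of the embedded curves costs at least 1, and at least 3
for non-orthogonal vectors.**
For Boolean vectors `a, b : Fin d → ℝ` and the plane curves with vertices
`π i = (3i, 1 + 2 aᵢ)`, `σ i = (3i, 2 - 2 bᵢ)` for `1 ≤ i ≤ d`, every traversal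
`f` has `max_{1 ≤ t ≤ T} ‖π (f t).1 - σ (f t).2‖ ≥ 1`; if moreover `⟨a, b⟩ ≠ 0`
then this maximum is at least `3`. -/
theorem traversal_cost_lower_bounds (d : ℕ) (hd : 0 < d) (a b : Fin d → ℝ)
    (ha : ∀ i, a i = 0 ∨ a i = 1) (hb : ∀ i, b i = 0 ∨ b i = 1)
    (π σ : ℕ → EuclideanSpace ℝ (Fin 2))
    (hπ : ∀ (i : ℕ) (h1 : 1 ≤ i) (h2 : i ≤ d),
      π i = ![3 * (i : ℝ), 1 + 2 * a ⟨i - 1, by omega⟩])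
    (hσ : ∀ (i : ℕ) (h1 : 1 ≤ i) (h2 : i ≤ d),
      σ i = ![3 * (i : ℝ), 2 - 2 * b ⟨i - 1, by omega⟩])
    (T : ℕ) (f : ℕ → ℕ × ℕ) (hf : IsTraversal d T f)
    (hT : 1 ≤ T) :
    1 ≤ (Finset.Icc 1 T).sup' (Finset.nonempty_Icc.mpr hT)
        (fun t => ‖π (f t).1 - σ (f t).2‖) ∧
    ((∑ i, a i * b i) ≠ 0 →
      3 ≤ (Finset.Icc 1 T).sup' (Finset.nonempty_Icc.mpr hT)
        (fun t => ‖π (f t).1 - σ (f t).2‖)) := by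
  have hπ' (i : Fin d) : (π (i + 1)).ofLp = ![3 * ((i + 1 : ℕ) : ℝ), 1 + 2 * a i] := by
    simpa using hπ (i + 1) (by omega) (by omega)
  have hσ' (i : Fin d) : (σ (i + 1)).ofLp = ![3 * ((i + 1 : ℕ) : ℝ), 2 - 2 * b i] := by
    simpa using hσ (i + 1) (by omega) (by omega)
  obtain ⟨-, hf1, -, hbounds, -⟩ := id hf
  constructor
  · refine le_sup'_of_le _ (left_mem_Icc.2 hT) ?_
    obtain ⟨-, hy⟩ := abs_sub_le_norm_sub_of_ofLp_eq (hπ' ⟨0, hd⟩) (hσ' ⟨0, hd⟩)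
    simpa [hf1] using (one_le_abs_of_mem_zero_one (ha _) (hb _)).trans hy
  · intro hab
    obtain ⟨i, -, hi⟩ := exists_ne_zero_of_sum_ne_zero hab
    obtain ⟨t, ht, hti⟩ := hf.exists_fst_eq (k := i + 1) (by omega) (by omega)
    obtain ⟨-, -, hj1, hjd⟩ := hbounds t (mem_Icc.1 ht).1 (mem_Icc.1 ht).2
    refine le_sup'_of_le _ ht ?_
    rcases eq_or_ne (f t).2 (i + 1) with htj | htj
    · obtain ⟨-, hy⟩ := abs_sub_le_norm_sub_of_ofLp_eq (hπ' i) (hσ' i)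
      have hai : a i = 1 := (ha i).resolve_left (left_ne_zero_of_mul hi)
      have hbi : b i = 1 := (hb i).resolve_left (right_ne_zero_of_mul hi)
      rw [hti, htj]
      calc (3 : ℝ) = |1 + 2 * a i - (2 - 2 * b i)| := by rw [hai, hbi]; norm_num
        _ ≤ _ := hy
    · obtain ⟨hx, -⟩ := abs_sub_le_norm_sub_of_ofLp_eq (hπ' i) (hσ (f t).2 hj1 hjd)
      rw [hti]
      exact (three_le_abs_sub_of_ne htj.symm).trans hx
end
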